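/- Let S be a left restriction semigroupoid. Then there exists a surjective function π and a restriction embedding (injective rigid morphism preserving *) from S into the left restriction category PT^op(π) of partial maps between fibers of π. Concretely, on a graphing of S with domain function D: S → S₀, the map α sending s to (D(s), α_s, R(s)), where α_s(t) = ts on domain {t : (t,s*) composable and ts* = t}, is a restriction embedding into PT^op(D). -/

import Mathlib

/-- An (Exel) semigroupoid: a partially defined associative operation. -/
structure Sgpd (S : Type*) where
  composable : S → S → Prop
  mul : S → S → S
  assoc₁ : ∀ s t r, composable s t → composable t r →
    composable (mul s t) r ∧ composable s (mul t r) ∧ mul (mul s t) r = mul s (mul t r)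
  assoc₂ : ∀ s t r, composable s t → composable (mul s t) r →
    composable t r ∧ composable s (mul t r) ∧ mul (mul s t) r = mul s (mul t r)
  assoc₃ : ∀ s t r, composable t r → composable s (mul t r) →
    composable s t ∧ composable (mul s t) r ∧ mul (mul s t) r = mul s (mul t r)

/-- A left restriction semigroupoid. -/
structure LRSgpd (S : Type*) extends Sgpd S where
  star : S → S
  lr1 : ∀ s, composable (star s) s ∧ mul (star s) s = s
  lr2 : ∀ s t, (composable (star s) (star t) ↔ composable (star t) (star s)) ∧
    (composable (star s) (star t) → mul (star s) (star t) = mul (star t) (star s))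
  lr3 : ∀ s t, composable (star s) t → star (mul (star s) t) = mul (star s) (star t)
  lr4 : ∀ s t, composable s t → mul s (star t) = mul (star (mul s t)) s

/-- A morphism of `PT^op(π)`: a triple `(d, f, r)` with `f` a partial map from a subset
of the fiber `π⁻¹(r)` to the fiber `π⁻¹(d)`. -/
structure PTMor {X Y : Type*} (π : X → Y) where
  d : Y
  r : Y
  f : X →. X
  mem_dom : ∀ x (h : x ∈ f.Dom), π x = r
  mem_ran : ∀ x (h : x ∈ f.Dom), π ((f x).get h) = d

/-- Composition in `PT^op(π)`: `(y,g,z) ∘ (x,f,y) = (x, f ⋆ g, z)`. -/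
def PTcomp {X Y : Type*} {π : X → Y} (A B : PTMor π) (h : A.d = B.r) : PTMor π where
  d := B.d
  r := A.r
  f := B.f.comp A.f
  mem_dom := by
    intro x hx
    obtain ⟨y, hy⟩ := (PFun.mem_dom (B.f.comp A.f) x).mp hx
    rw [PFun.comp_apply] at hy
    obtain ⟨z, hz, -⟩ := Part.mem_bind_iff.mp hy
    exact A.mem_dom x ((PFun.mem_dom A.f x).mpr ⟨z, hz⟩)
  mem_ran := by
    intro x hx
    have hmem : ((B.f.comp A.f) x).get hx ∈ (A.f x).bind B.f := by
      rw [← PFun.comp_apply]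
      exact Part.get_mem hx
    obtain ⟨z, hz, hw⟩ := Part.mem_bind_iff.mp hmem
    have hzd : z ∈ B.f.Dom := (PFun.mem_dom B.f z).mpr ⟨_, hw⟩
    have h1 := B.mem_ran z hzd
    rwa [Part.get_eq_of_mem hw hzd] at h1

/-- The restriction of a morphism of `PT^op(π)`: the identity on the domain of `f`. -/
def PTstar {X Y : Type*} {π : X → Y} (A : PTMor π) : PTMor π where
  d := A.r
  r := A.r
  f := fun x => ⟨(A.f x).Dom, fun _ => x⟩
  mem_dom := fun x h => A.mem_dom x h
  mem_ran := fun x h => A.mem_dom x h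

/-!
Take as objects the classes of elements with the same right composability; the class of `s`
plays the role of `D(s)`, and that of `s*` the role of `R(s)`. Each `s` acts on the right,
`u ↦ us`, on the elements `u` with `us* = u`. Using `us* = (us)* u` (lr4), the domain of the
action of `st` is computed to be `{u : us* = u, (us)t* = us}`, which is exactly the domain of
the composite action, so `s ↦ α_s` is a functor. It is injective because `α_s` sends `s*` to
`s`, and it preserves `*` because `us* = u` on the domain of `α_s`.
-/

theorem PTMor.ext {X Y : Type*} {π : X → Y} {A B : PTMor π}
    (hd : A.d = B.d) (hr : A.r = B.r) (hf : A.f = B.f) : A = B := by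
  cases A; cases B; cases hd; cases hr; cases hf; rfl

namespace LRSgpd

variable {S : Type*} (L : LRSgpd S)

theorem composable_star_iff {x s : S} : L.composable x (L.star s) ↔ L.composable x s := by
  obtain ⟨hc, he⟩ := L.lr1 s
  refine ⟨fun h => ?_, fun h => (L.assoc₃ x (L.star s) s hc (by rwa [he])).1⟩
  simpa only [he] using (L.assoc₁ x (L.star s) s h hc).2.1

theorem composable_star_self (s : S) : L.composable (L.star s) (L.star s) :=
  L.composable_star_iff.2 (L.lr1 s).1

theorem star_mul_star_self (s : S) : L.mul (L.star s) (L.star s) = L.star s := by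
  simpa only [(L.lr1 s).2] using (L.lr3 s s (L.lr1 s).1).symm

theorem star_star (s : S) : L.star (L.star s) = L.star s := by
  have h := L.lr3 s (L.star s) (L.composable_star_self s)
  rw [L.star_mul_star_self s] at h
  rw [h, (L.lr2 s (L.star s)).2 (L.composable_star_iff.2 (L.composable_star_self s)),
    (L.lr1 (L.star s)).2]

theorem composable_star_mul {s t : S} (h : L.composable s t) :
    L.composable (L.star s) (L.mul s t) :=
  (L.assoc₁ _ s t (L.lr1 s).1 h).2.1

theorem star_mul_mul {s t : S} (h : L.composable s t) :
    L.mul (L.star s) (L.mul s t) = L.mul s t := by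
  rw [← (L.assoc₁ _ s t (L.lr1 s).1 h).2.2, (L.lr1 s).2]

theorem composable_star_mul_left {s t : S} (h : L.composable s t) :
    L.composable (L.star (L.mul s t)) s :=
  (L.assoc₃ _ s t h (L.lr1 _).1).1

theorem mul_star_eq_star_of_mul_eq {a w : S} (h : L.composable (L.star a) w)
    (e : L.mul (L.star a) w = w) : L.mul (L.star a) (L.star w) = L.star w := by
  rw [← L.lr3 a w h, e]

theorem star_mul_star_mul {s t : S} (h : L.composable s t) :
    L.mul (L.star s) (L.star (L.mul s t)) = L.star (L.mul s t) :=
  L.mul_star_eq_star_of_mul_eq (L.composable_star_mul h) (L.star_mul_mul h)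

theorem composable_mul_iff {s t : S} (h : L.composable s t) (x : S) :
    L.composable (L.mul s t) x ↔ L.composable t x :=
  ⟨fun hx => (L.assoc₂ s t x h hx).1, fun hx => (L.assoc₁ s t x h hx).1⟩

theorem composable_iff_star_composable {s t : S} (h : L.composable s t) (x : S) :
    L.composable s x ↔ L.composable (L.star t) x := by
  have hst : L.composable s (L.star t) := L.composable_star_iff.2 h
  have hst' := L.composable_star_mul_left h
  rw [← L.composable_mul_iff hst, L.lr4 s t h, L.composable_mul_iff hst']

def domSetoid : Setoid S where
  r a b := ∀ x, L.composable a x ↔ L.composable b x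
  iseqv := ⟨fun _ _ => Iff.rfl, fun h x => (h x).symm, fun h₁ h₂ x => (h₁ x).trans (h₂ x)⟩

def dom : S → Quotient L.domSetoid := Quotient.mk _

theorem dom_eq_dom {a b : S} (h : ∀ x, L.composable a x ↔ L.composable b x) :
    L.dom a = L.dom b :=
  Quotient.sound h

theorem dom_eq_dom_star {s t : S} (h : L.composable s t) : L.dom s = L.dom (L.star t) :=
  L.dom_eq_dom (L.composable_iff_star_composable h)

theorem dom_mul {s t : S} (h : L.composable s t) : L.dom (L.mul s t) = L.dom t :=
  L.dom_eq_dom (L.composable_mul_iff h)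

theorem composable_of_dom_eq_dom_star {s t : S} (h : L.dom s = L.dom (L.star t)) :
    L.composable s t :=
  (Quotient.exact h t).2 (L.lr1 t).1

def ActDom (s u : S) : Prop := L.composable u (L.star s) ∧ L.mul u (L.star s) = u

theorem ActDom.composable {s u : S} (h : L.ActDom s u) : L.composable u s :=
  L.composable_star_iff.1 h.1

theorem actDom_iff {s u : S} :
    L.ActDom s u ↔ L.composable u s ∧ L.mul (L.star (L.mul u s)) u = u := by
  refine ⟨fun h => ⟨h.composable, ?_⟩, fun ⟨hc, he⟩ => ⟨L.composable_star_iff.2 hc, ?_⟩⟩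
  · rw [← L.lr4 u s h.composable, h.2]
  · rw [L.lr4 u s hc, he]

theorem actDom_self_star (s : S) : L.ActDom s (L.star s) :=
  ⟨L.composable_star_self s, L.star_mul_star_self s⟩

/-- The domain of `α_{st}` is the domain of `α_t ∘ α_s`. -/
theorem actDom_mul_iff {s t u : S} (hst : L.composable s t) :
    L.ActDom (L.mul s t) u ↔ L.ActDom s u ∧ L.ActDom t (L.mul u s) := by
  simp only [actDom_iff]
  constructor
  · rintro ⟨hu, he⟩
    have hus := (L.assoc₃ u s t hst hu).1
    have hwt := (L.assoc₁ u s t hus hst).1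
    rw [← (L.assoc₁ u s t hus hst).2.2] at he
    have hwu := (L.assoc₃ _ u s hus (L.composable_star_mul_left hwt)).1
    have hc := L.composable_star_iff.2 (L.composable_star_mul hwt)
    refine ⟨⟨hus, ?_⟩, hwt, ?_⟩
    · calc L.mul (L.star (L.mul u s)) u
          = L.mul (L.star (L.mul u s)) (L.mul (L.star (L.mul (L.mul u s) t)) u) :=
            congrArg _ he.symm
        _ = L.mul (L.star (L.mul (L.mul u s) t)) u := by
            rw [← (L.assoc₁ _ _ u hc hwu).2.2, L.star_mul_star_mul hwt]
        _ = u := he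
    · rw [← (L.assoc₁ _ u s hwu hus).2.2, he]
  · rintro ⟨⟨hus, hu⟩, hwt, hw⟩
    have hwt' := L.composable_star_mul_left hwt
    have hc := (L.assoc₃ _ u s hus (L.lr1 (L.mul u s)).1).1
    refine ⟨(L.assoc₁ u s t hus hst).2.1, ?_⟩
    rw [← (L.assoc₁ u s t hus hst).2.2]
    calc L.mul (L.star (L.mul (L.mul u s) t)) u
        = L.mul (L.star (L.mul (L.mul u s) t)) (L.mul (L.star (L.mul u s)) u) :=
          congrArg _ hu.symm
      _ = L.mul (L.star (L.mul u s)) u := by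
          rw [← (L.assoc₁ _ _ u (L.composable_star_iff.2 hwt') hc).2.2,
            L.mul_star_eq_star_of_mul_eq hwt' hw]
      _ = u := hu

/-- The morphism `α_s = (D(s), u ↦ us, R(s))` of `PT^op(D)`. -/
def act (s : S) : PTMor L.dom where
  d := L.dom s
  r := L.dom (L.star s)
  f u := ⟨L.ActDom s u, fun _ => L.mul u s⟩
  mem_dom u h := by
    simpa only [L.star_star] using L.dom_eq_dom_star h.1
  mem_ran u h := L.dom_mul h.composable

theorem mem_act_iff {s u a : S} : a ∈ (L.act s).f u ↔ L.ActDom s u ∧ L.mul u s = a :=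
  ⟨fun ⟨h, e⟩ => ⟨h, e⟩, fun ⟨h, e⟩ => ⟨h, e⟩⟩

theorem act_injective : Function.Injective L.act := by
  intro s t h
  have key : ∀ {s t}, L.act s = L.act t → L.ActDom t (L.star s) ∧ L.mul (L.star s) t = s :=
    fun h => L.mem_act_iff.1 (h ▸ L.mem_act_iff.2 ⟨L.actDom_self_star _, (L.lr1 _).2⟩)
  obtain ⟨⟨hc, hts⟩, hs⟩ := key h
  obtain ⟨⟨-, hst⟩, -⟩ := key h.symm
  have hstar : L.star s = L.star t := by rw [← hts, (L.lr2 s t).2 hc, hst]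
  rw [← hs, hstar, (L.lr1 t).2]

theorem act_comp {s t : S} (h : L.composable s t) :
    ∃ hc : (L.act s).d = (L.act t).r, PTcomp (L.act s) (L.act t) hc = L.act (L.mul s t) := by
  refine ⟨L.dom_eq_dom_star h, PTMor.ext (L.dom_mul h).symm ?_ ?_⟩
  · exact (L.dom_eq_dom_star (L.composable_star_mul_left h)).symm
  · funext u
    ext a
    simp only [PTcomp, PFun.comp_apply]
    refine Part.mem_bind_iff.trans ?_
    simp only [mem_act_iff, L.actDom_mul_iff h]
    constructor
    · rintro ⟨_, ⟨hs, rfl⟩, ht, rfl⟩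
      exact ⟨⟨hs, ht⟩, (L.assoc₁ u s t hs.composable h).2.2.symm⟩
    · rintro ⟨⟨hs, ht⟩, rfl⟩
      exact ⟨_, ⟨hs, rfl⟩, ht, (L.assoc₁ u s t hs.composable h).2.2⟩

theorem act_star (s : S) : PTstar (L.act s) = L.act (L.star s) := by
  refine PTMor.ext rfl (by simp only [act, PTstar, L.star_star]) ?_
  funext u
  ext a
  simp only [PTstar, Part.mem_mk_iff, mem_act_iff, ActDom, L.star_star]
  exact ⟨fun ⟨h, e⟩ => ⟨h, h.2.trans e⟩, fun ⟨h, e⟩ => ⟨h, h.2.symm.trans e⟩⟩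

end LRSgpd

theorem stmt14 {S : Type u} (L : LRSgpd S) :
    ∃ (Y : Type u) (π : S → Y), Function.Surjective π ∧
      ∃ α : S → PTMor π,
        Function.Injective α ∧
        (∀ s t, ∀ _ : L.composable s t, ∃ hc : (α s).d = (α t).r,
          PTcomp (α s) (α t) hc = α (L.mul s t)) ∧
        (∀ s t, (α s).d = (α t).r → L.composable s t) ∧
        (∀ s, PTstar (α s) = α (L.star s)) :=
  ⟨_, L.dom, Quotient.mk_surjective, L.act, L.act_injective, fun _ _ h => L.act_comp h,
    fun _ _ h => L.composable_of_dom_eq_dom_star h, L.act_star⟩
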